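/- For all s ∈ [0, 4π] and θ ∈ [0, 2π], ⟨ ∫_{s−4π+θ}^{s+θ} A(τ) φ₀(τ−θ, (sin τ, cos τ)) dτ, (sin θ, cos θ) ⟩ = 4π sin²θ + cos²θ · ∫_{s−4π+θ}^{s+θ} e^{2τ} dτ, and in particular this quantity is strictly positive. (integral computation verifying condition (B₂) in the Example section) -/

import Mathlib

open scoped RealInnerProductSpace

/-- The matrix `A(τ)` with rows `(cos τ, −sin τ)` and `(e^{2τ} sin τ, e^{2τ} cos τ)`. -/
noncomputable def Amat (τ : ℝ) : Matrix (Fin 2) (Fin 2) ℝ :=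
  !![Real.cos τ, -Real.sin τ;
     Real.exp (2 * τ) * Real.sin τ, Real.exp (2 * τ) * Real.cos τ]

/-- The matrix `B(ξ)` with rows `(ξ₂, ξ₁)` and `(−ξ₁, ξ₂)`. -/
noncomputable def Bmat (ξ : EuclideanSpace ℝ (Fin 2)) : Matrix (Fin 2) (Fin 2) ℝ :=
  !![ξ 1, ξ 0; -(ξ 0), ξ 1]

/-- The perturbation `φ₀(t, ξ) = B(ξ) (ξ₁ cos t − ξ₂ sin t, ξ₁ sin t + ξ₂ cos t)`. -/
noncomputable def phi0 (t : ℝ) (ξ : EuclideanSpace ℝ (Fin 2)) :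
    EuclideanSpace ℝ (Fin 2) :=
  WithLp.toLp 2 ((Bmat ξ).mulVec
    ![ξ 0 * Real.cos t - ξ 1 * Real.sin t, ξ 0 * Real.sin t + ξ 1 * Real.cos t])

/-- A 2×2 real matrix acting on `ℝ²` (Euclidean). -/
noncomputable def mulVecE (M : Matrix (Fin 2) (Fin 2) ℝ)
    (v : EuclideanSpace ℝ (Fin 2)) : EuclideanSpace ℝ (Fin 2) := WithLp.toLp 2 (M.mulVec v)

/-
Proof idea: the rotation in `φ₀` and the factor `A(τ)` cancel, so the integrand is the
vector `(sin θ, e^{2τ} cos θ)`. Its integral over an interval of length `4π`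
is `(4π sin θ, cos θ ∫ e^{2τ} dτ)`, and pairing with `(sin θ, cos θ)` gives the formula.
Positivity holds because `sin²θ + cos²θ = 1` and both coefficients `4π` and `∫ e^{2τ} dτ`
are positive.
-/

open intervalIntegral in
theorem intervalIntegral.integral_const_add_smul {E : Type*} [NormedAddCommGroup E]
    [NormedSpace ℝ E] [CompleteSpace E] {a b : ℝ} {g : ℝ → ℝ}
    (hg : IntervalIntegrable g MeasureTheory.volume a b) (u v : E) :
    ∫ τ in a..b, (u + g τ • v) = (b - a) • u + (∫ τ in a..b, g τ) • v := by
  rw [integral_add intervalIntegrable_const ⟨hg.1.smul_const v, hg.2.smul_const v⟩,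
    integral_const, integral_smul_const]

theorem integral_exp_two_mul_pos {a b : ℝ} (hab : a < b) :
    0 < ∫ τ in a..b, Real.exp (2 * τ) :=
  intervalIntegral.intervalIntegral_pos_of_pos_on
    ((Real.continuous_exp.comp (continuous_const_mul 2)).intervalIntegrable a b)
    (fun _ _ => Real.exp_pos _) hab

theorem mul_sin_sq_add_cos_sq_mul_pos {c d : ℝ} (hc : 0 < c) (hd : 0 < d) (θ : ℝ) :
    0 < c * Real.sin θ ^ 2 + Real.cos θ ^ 2 * d :=
  calc 0 < min c d := lt_min hc hd
    _ = min c d * (Real.sin θ ^ 2 + Real.cos θ ^ 2) := by rw [Real.sin_sq_add_cos_sq, mul_one]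
    _ ≤ c * Real.sin θ ^ 2 + Real.cos θ ^ 2 * d := by
      nlinarith [min_le_left c d, min_le_right c d, sq_nonneg (Real.sin θ),
        sq_nonneg (Real.cos θ)]

theorem mulVecE_Amat_phi0_eq (θ τ : ℝ) :
    mulVecE (Amat τ)
        (phi0 (τ - θ) (WithLp.toLp 2 ![Real.sin τ, Real.cos τ] : EuclideanSpace ℝ (Fin 2))) =
      (WithLp.toLp 2 ![Real.sin θ, 0] : EuclideanSpace ℝ (Fin 2)) +
        Real.exp (2 * τ) • (WithLp.toLp 2 ![0, Real.cos θ] : EuclideanSpace ℝ (Fin 2)) := by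
  ext i
  fin_cases i
  · simp [mulVecE, Amat, phi0, Bmat, dotProduct, Real.sin_sub, Real.cos_sub]
    linear_combination (Real.sin θ * (Real.sin τ ^ 2 + Real.cos τ ^ 2 + 1)) *
      Real.sin_sq_add_cos_sq τ
  · simp [mulVecE, Amat, phi0, Bmat, dotProduct, Real.sin_sub, Real.cos_sub]
    linear_combination (Real.exp (2 * τ) * Real.cos θ * (Real.sin τ ^ 2 + Real.cos τ ^ 2 + 1)) *
      Real.sin_sq_add_cos_sq τ

/-- **Integral computation verifying condition (B₂) in the Example section.**
For all `s ∈ [0, 4π]` and `θ ∈ [0, 2π]`,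
`⟨∫_{s−4π+θ}^{s+θ} A(τ) φ₀(τ−θ, (sin τ, cos τ)) dτ, (sin θ, cos θ)⟩
  = 4π sin²θ + cos²θ ∫_{s−4π+θ}^{s+θ} e^{2τ} dτ > 0`. -/
theorem example_B2_integral_computation :
    ∀ s ∈ Set.Icc (0 : ℝ) (4 * Real.pi), ∀ θ ∈ Set.Icc (0 : ℝ) (2 * Real.pi),
      (⟪∫ τ in (s - 4 * Real.pi + θ)..(s + θ),
          mulVecE (Amat τ)
            (phi0 (τ - θ) (WithLp.toLp 2 ![Real.sin τ, Real.cos τ] : EuclideanSpace ℝ (Fin 2))),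
        (WithLp.toLp 2 ![Real.sin θ, Real.cos θ] : EuclideanSpace ℝ (Fin 2))⟫ =
        4 * Real.pi * Real.sin θ ^ 2 +
          Real.cos θ ^ 2 *
            ∫ τ in (s - 4 * Real.pi + θ)..(s + θ), Real.exp (2 * τ)) ∧
      0 < ⟪∫ τ in (s - 4 * Real.pi + θ)..(s + θ),
          mulVecE (Amat τ)
            (phi0 (τ - θ) (WithLp.toLp 2 ![Real.sin τ, Real.cos τ] : EuclideanSpace ℝ (Fin 2))),
        (WithLp.toLp 2 ![Real.sin θ, Real.cos θ] : EuclideanSpace ℝ (Fin 2))⟫ := by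
  intro s _ θ _
  have hexp : IntervalIntegrable (fun τ : ℝ => Real.exp (2 * τ)) MeasureTheory.volume
      (s - 4 * Real.pi + θ) (s + θ) :=
    (Real.continuous_exp.comp (continuous_const_mul 2)).intervalIntegrable _ _
  have hformula : ⟪∫ τ in (s - 4 * Real.pi + θ)..(s + θ),
        mulVecE (Amat τ)
          (phi0 (τ - θ) (WithLp.toLp 2 ![Real.sin τ, Real.cos τ] : EuclideanSpace ℝ (Fin 2))),
      (WithLp.toLp 2 ![Real.sin θ, Real.cos θ] : EuclideanSpace ℝ (Fin 2))⟫ =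
      4 * Real.pi * Real.sin θ ^ 2 +
        Real.cos θ ^ 2 * ∫ τ in (s - 4 * Real.pi + θ)..(s + θ), Real.exp (2 * τ) := by
    simp only [mulVecE_Amat_phi0_eq θ, intervalIntegral.integral_const_add_smul hexp]
    simp [inner_add_left, PiLp.inner_apply]
    ring
  refine ⟨hformula, hformula ▸ mul_sin_sq_add_cos_sq_mul_pos (by positivity) ?_ θ⟩
  exact integral_exp_two_mul_pos (by linarith [Real.pi_pos])
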